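/- arXiv:2406.15788 — 7 statements merged into one kernel-verified Lean document; each statement's English description precedes it below -/
import Mathlib

section
/- For every T ≥ 1, every π ∈ Π and every λ ∈ Λ, L(π̂_T, λ) ≥ L(π, λ̂_T) − R_T/T, where π̂_T = (1/T) Σ_{t=1}^T π_t and λ̂_T = (1/T) Σ_{t=1}^T λ_t. Consequently, in the extended reals, sup_{π∈Π} L(π, λ̂_T) − inf_{λ∈Λ} L(π̂_T, λ) ≤ R_T/T, i.e. the duality gap of the averaged iterates is at most R_T/T. -/
/-!
Best responses give `∑ₜ L(p, λₜ) ≤ ∑ₜ L(πₜ, λₜ)` for every `p`, and no regret bounds the right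
side by `∑ₜ L(πₜ, l) + R` for every `l`. Dividing by `T`, affineness in each argument (Jensen's
inequality in both directions) turns the two averaged sums into `L(p, λ̂_T)` and `L(π̂_T, l)`.
The duality gap bound is this inequality passed to the supremum over `p` and infimum over `l`.
-/

open Finset

section Affine

variable {E : Type*} [AddCommGroup E] [Module ℝ E]

def AffineOn (s : Set E) (f : E → ℝ) : Prop :=
  ∀ c : ℝ, 0 ≤ c → c ≤ 1 → ∀ x ∈ s, ∀ y ∈ s, f (c • x + (1 - c) • y) = c * f x + (1 - c) * f y

variable {s : Set E} {f : E → ℝ}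

lemma AffineOn.convexOn (hf : AffineOn s f) (hs : Convex ℝ s) : ConvexOn ℝ s f :=
  ⟨hs, fun x hx y hy a b ha hb hab => by
    obtain rfl : b = 1 - a := by linarith
    exact (hf a ha (by linarith) x hx y hy).le⟩

lemma AffineOn.concaveOn (hf : AffineOn s f) (hs : Convex ℝ s) : ConcaveOn ℝ s f :=
  ⟨hs, fun x hx y hy a b ha hb hab => by
    obtain rfl : b = 1 - a := by linarith
    exact (hf a ha (by linarith) x hx y hy).ge⟩

lemma AffineOn.map_average (hf : AffineOn s f) (hs : Convex ℝ s) {ι : Type*} {t : Finset ι}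
    (ht : t.Nonempty) {z : ι → E} (hz : ∀ i ∈ t, z i ∈ s) :
    f ((#t : ℝ)⁻¹ • ∑ i ∈ t, z i) = (#t : ℝ)⁻¹ * ∑ i ∈ t, f (z i) := by
  have hw₀ : ∀ i ∈ t, (0 : ℝ) ≤ (#t : ℝ)⁻¹ := fun _ _ => by positivity
  have hw₁ : ∑ _i ∈ t, (#t : ℝ)⁻¹ = 1 := by
    rw [sum_const, nsmul_eq_mul, mul_inv_cancel₀ (by exact_mod_cast ht.card_ne_zero)]
  have key := le_antisymm ((hf.convexOn hs).map_sum_le hw₀ hw₁ hz)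
    ((hf.concaveOn hs).le_map_sum hw₀ hw₁ hz)
  simpa only [← smul_sum, ← mul_sum, smul_eq_mul] using key

end Affine

theorem EReal.biSup_sub_biInf_le {α β : Type*} {A : Set α} {B : Set β} {f : α → ℝ} {g : β → ℝ}
    {ε : ℝ} (h : ∀ a ∈ A, ∀ b ∈ B, f a - ε ≤ g b) :
    (⨆ a ∈ A, (f a : EReal)) - (⨅ b ∈ B, (g b : EReal)) ≤ ε := by
  refine EReal.sub_le_of_le_add' (iSup₂_le fun a ha => ?_)
  have hinf : ((f a - ε : ℝ) : EReal) ≤ ⨅ b ∈ B, (g b : EReal) :=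
    le_iInf₂ fun b hb => EReal.coe_le_coe_iff.2 (h a ha b hb)
  calc (f a : EReal) = ((f a - ε : ℝ) : EReal) + ε := by
        rw [← EReal.coe_add, _root_.sub_add_cancel]
    _ ≤ (⨅ b ∈ B, (g b : EReal)) + ε := by gcongr

theorem sub_le_of_bestResponse_of_noRegret {V W ι : Type*} [AddCommGroup V] [Module ℝ V]
    [AddCommGroup W] [Module ℝ W] {Pi : Set V} {Lam : Set W} (hPi : Convex ℝ Pi)
    (hLam : Convex ℝ Lam) {L : V → W → ℝ} (hL₁ : ∀ l ∈ Lam, AffineOn Pi (L · l))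
    (hL₂ : ∀ p ∈ Pi, AffineOn Lam (L p)) {s : Finset ι} (hs : s.Nonempty) {π : ι → V}
    {lam : ι → W} (hπ : ∀ t ∈ s, π t ∈ Pi) (hlam : ∀ t ∈ s, lam t ∈ Lam)
    (hbest : ∀ t ∈ s, ∀ p ∈ Pi, L p (lam t) ≤ L (π t) (lam t)) {R : ℝ}
    (hnoregret : ∀ l ∈ Lam, ∑ t ∈ s, L (π t) (lam t) ≤ ∑ t ∈ s, L (π t) l + R)
    {p : V} (hp : p ∈ Pi) {l : W} (hl : l ∈ Lam) :
    L p ((#s : ℝ)⁻¹ • ∑ t ∈ s, lam t) - R / #s ≤ L ((#s : ℝ)⁻¹ • ∑ t ∈ s, π t) l := by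
  rw [(hL₂ p hp).map_average hLam hs hlam, (hL₁ l hl).map_average hPi hs hπ,
    sub_le_iff_le_add, div_eq_inv_mul, ← mul_add]
  gcongr
  exact (sum_le_sum fun t ht => hbest t ht p hp).trans (hnoregret l hl)

theorem meta_algorithm_duality_gap_general
    {V W : Type*} [AddCommGroup V] [Module ℝ V] [AddCommGroup W] [Module ℝ W]
    (Pi : Set V) (Lam : Set W) (hPi : Convex ℝ Pi) (hLam : Convex ℝ Lam)
    (L : V → W → ℝ)
    (haff1 : ∀ c : ℝ, 0 ≤ c → c ≤ 1 → ∀ p ∈ Pi, ∀ p' ∈ Pi, ∀ l ∈ Lam,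
      L (c • p + (1 - c) • p') l = c * L p l + (1 - c) * L p' l)
    (haff2 : ∀ c : ℝ, 0 ≤ c → c ≤ 1 → ∀ p ∈ Pi, ∀ l ∈ Lam, ∀ l' ∈ Lam,
      L p (c • l + (1 - c) • l') = c * L p l + (1 - c) * L p l')
    (T : ℕ) (hT : 1 ≤ T)
    (π : ℕ → V) (lam : ℕ → W)
    (hπ : ∀ t, π t ∈ Pi) (hlam : ∀ t, lam t ∈ Lam)
    (hbest : ∀ t ∈ Finset.Icc 1 T, ∀ p ∈ Pi, L p (lam t) ≤ L (π t) (lam t))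
    (R : ℝ)
    (hnoregret : ∀ l ∈ Lam,
      ∑ t ∈ Finset.Icc 1 T, L (π t) (lam t) ≤ (∑ t ∈ Finset.Icc 1 T, L (π t) l) + R)
    (πhat : V) (lamhat : W)
    (hπhat : πhat = (T : ℝ)⁻¹ • ∑ t ∈ Finset.Icc 1 T, π t)
    (hlamhat : lamhat = (T : ℝ)⁻¹ • ∑ t ∈ Finset.Icc 1 T, lam t) :
    (∀ p ∈ Pi, ∀ l ∈ Lam, L p lamhat - R / T ≤ L πhat l) ∧
    (⨆ p ∈ Pi, ((L p lamhat : ℝ) : EReal)) - (⨅ l ∈ Lam, ((L πhat l : ℝ) : EReal))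
      ≤ ((R / T : ℝ) : EReal) := by
  have hcard : (#(Icc 1 T) : ℝ) = T := by simp
  have hgap : ∀ p ∈ Pi, ∀ l ∈ Lam, L p lamhat - R / T ≤ L πhat l := by
    intro p hp l hl
    have := sub_le_of_bestResponse_of_noRegret hPi hLam
      (fun l hl c hc₀ hc₁ p hp p' hp' => haff1 c hc₀ hc₁ p hp p' hp' l hl)
      (fun p hp c hc₀ hc₁ l hl l' hl' => haff2 c hc₀ hc₁ p hp l hl l' hl')
      (nonempty_Icc.2 hT) (fun t _ => hπ t) (fun t _ => hlam t) hbest hnoregret hp hl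
    rwa [hcard, ← hπhat, ← hlamhat] at this
  exact ⟨hgap, EReal.biSup_sub_biInf_le hgap⟩

/-- Convergence guarantee of the meta algorithm (Proposition 2):
the averaged iterates of the best-response / no-regret repeated game have duality
gap at most `R/T`. -/
theorem meta_algorithm_duality_gap
    {V W : Type*} [AddCommGroup V] [Module ℝ V] [AddCommGroup W] [Module ℝ W]
    (Pi : Set V) (Lam : Set W) (hPi : Convex ℝ Pi) (hLam : Convex ℝ Lam)
    (L : V → W → ℝ)
    (haff1 : ∀ c : ℝ, 0 ≤ c → c ≤ 1 → ∀ p ∈ Pi, ∀ p' ∈ Pi, ∀ l ∈ Lam,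
      L (c • p + (1 - c) • p') l = c * L p l + (1 - c) * L p' l)
    (haff2 : ∀ c : ℝ, 0 ≤ c → c ≤ 1 → ∀ p ∈ Pi, ∀ l ∈ Lam, ∀ l' ∈ Lam,
      L p (c • l + (1 - c) • l') = c * L p l + (1 - c) * L p l')
    (T : ℕ) (hT : 1 ≤ T)
    (π : ℕ → V) (lam : ℕ → W)
    (hπ : ∀ t, π t ∈ Pi) (hlam : ∀ t, lam t ∈ Lam)
    (hbest : ∀ t ∈ Finset.Icc 1 T, ∀ p ∈ Pi, L p (lam t) ≤ L (π t) (lam t))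
    (R : ℝ) (hR : 0 ≤ R)
    (hnoregret : ∀ l ∈ Lam,
      ∑ t ∈ Finset.Icc 1 T, L (π t) (lam t) ≤ (∑ t ∈ Finset.Icc 1 T, L (π t) l) + R)
    (πhat : V) (lamhat : W)
    (hπhat : πhat = (T : ℝ)⁻¹ • ∑ t ∈ Finset.Icc 1 T, π t)
    (hlamhat : lamhat = (T : ℝ)⁻¹ • ∑ t ∈ Finset.Icc 1 T, lam t) :
    (∀ p ∈ Pi, ∀ l ∈ Lam, L p lamhat - R / T ≤ L πhat l) ∧
    (⨆ p ∈ Pi, ((L p lamhat : ℝ) : EReal)) - (⨅ l ∈ Lam, ((L πhat l : ℝ) : EReal))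
      ≤ ((R / T : ℝ) : EReal) :=
  meta_algorithm_duality_gap_general Pi Lam hPi hLam L haff1 haff2 T hT π lam hπ hlam hbest R
    hnoregret πhat lamhat hπhat hlamhat
end

section
/- Suppose V_r is the fixed point of the robust Bellman consistency operator for r and π, i.e. V_r(s) = r(s,π(s)) + γ min_{P ∈ 𝒫_{s,π(s)}} ⟨P, V_r⟩ for all s ∈ S, and each V_{g_i} is the fixed point of the robust Bellman consistency operator for g_i and π. Then the function V_r − Σ_{i=1}^m λ_i V_{g_i} is a fixed point of the consistency operator T^π, and by the γ-contraction property of T^π it is its unique fixed point. -/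
/-!
Writing `min_{P ∈ 𝒫} ⟨P, v⟩ = ⟨P^o, v⟩ + min_{P ∈ 𝒫} ⟨P - P^o, v⟩`, each robust Bellman equation
`V = f + γ min ⟨P, V⟩` becomes `V = f + γ ⟨P^o, V⟩ + γ min ⟨P - P^o, V⟩`. Since `T^π` is built from
exactly these correction terms and `v ↦ ⟨P^o, v⟩` is linear, the combination `V_r - Σ λᵢ V_{g_i}`
is fixed by `T^π`. Two values of `T^π` differ by `γ P^o` applied to the difference of the arguments,
and a stochastic matrix has sup-norm at most one, so `T^π` is a `γ`-contraction and its fixed point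
is unique.
-/

open Finset

theorem sInf_image_sum_sub_mul {ι : Type*} [Fintype ι] {K : Set (ι → ℝ)} (hK : K.Nonempty)
    (hKc : IsCompact K) (c v : ι → ℝ) :
    sInf ((fun p : ι → ℝ => ∑ i, (p i - c i) * v i) '' K)
      = sInf ((fun p : ι → ℝ => ∑ i, p i * v i) '' K) - ∑ i, c i * v i := by
  have hcont : Continuous fun p : ι → ℝ => ∑ i, p i * v i := by fun_prop
  have hcomp : (fun p : ι → ℝ => ∑ i, (p i - c i) * v i)
      = OrderIso.subRight (∑ i, c i * v i) ∘ fun p : ι → ℝ => ∑ i, p i * v i := by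
    funext p
    simp [sub_mul]
  rw [hcomp, Set.image_comp,
    ← OrderIso.map_csInf' _ (hK.image _) (hKc.image hcont).bddBelow]
  rfl

theorem eq_add_sum_mul_add_sInf_sub_of_eq {ι : Type*} [Fintype ι] {K : Set (ι → ℝ)}
    (hK : K.Nonempty) (hKc : IsCompact K) (c v : ι → ℝ) {x f γ : ℝ}
    (h : x = f + γ * sInf ((fun p : ι → ℝ => ∑ i, p i * v i) '' K)) :
    x = f + γ * ∑ i, c i * v i
      + γ * sInf ((fun p : ι → ℝ => ∑ i, (p i - c i) * v i) '' K) := by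
  rw [sInf_image_sum_sub_mul hK hKc]
  linear_combination h

theorem sum_mul_sub_sum_mul {ι κ : Type*} [Fintype ι] [Fintype κ] (p a : ι → ℝ) (l : κ → ℝ)
    (b : κ → ι → ℝ) :
    ∑ j, p j * (a j - ∑ k, l k * b k j) = ∑ j, p j * a j - ∑ k, l k * ∑ j, p j * b k j := by
  simp only [mul_sub, mul_sum, sum_sub_distrib, mul_left_comm (p _)]
  rw [sum_comm]

theorem abs_sum_mul_le_norm_of_stochastic {ι : Type*} [Fintype ι] {p : ι → ℝ}
    (hp : (∀ i, 0 ≤ p i) ∧ ∑ i, p i = 1) (x : ι → ℝ) : |∑ i, p i * x i| ≤ ‖x‖ :=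
  calc |∑ i, p i * x i| ≤ ∑ i, |p i * x i| := abs_sum_le_sum_abs _ _
    _ ≤ ∑ i, p i * ‖x‖ := by
      gcongr with i
      rw [abs_mul, abs_of_nonneg (hp.1 i)]
      exact mul_le_mul_of_nonneg_left (norm_le_pi_norm x i) (hp.1 i)
    _ = ‖x‖ := by rw [← sum_mul, hp.2, one_mul]

theorem contractingWith_of_sub_eq_mul_stochastic {ι : Type*} [Fintype ι] {γ : NNReal}
    (hγ : γ < 1) {P : ι → ι → ℝ} (hP : ∀ i, (∀ j, 0 ≤ P i j) ∧ ∑ j, P i j = 1)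
    {T : (ι → ℝ) → ι → ℝ}
    (hT : ∀ w v i, T w i - T v i = γ * ∑ j, P i j * (w j - v j)) :
    ContractingWith γ T := by
  refine ⟨hγ, LipschitzWith.of_dist_le_mul fun w v => ?_⟩
  refine (dist_pi_le_iff (by positivity)).2 fun i => ?_
  rw [Real.dist_eq, hT, abs_mul, NNReal.abs_eq, dist_eq_norm]
  gcongr
  exact abs_sum_mul_le_norm_of_stochastic (hP i) (w - v)

theorem consistency_operator_fixed_point_general
    {S A : Type*} [Fintype S]
    (γ : ℝ) (hγ0 : 0 ≤ γ) (hγ1 : γ < 1)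
    (Po : S → A → S → ℝ)
    (hPo : ∀ s a, (∀ s', 0 ≤ Po s a s') ∧ ∑ s', Po s a s' = 1)
    (Pu : S → A → Set (S → ℝ))
    (hPune : ∀ s a, (Pu s a).Nonempty)
    (hPucpt : ∀ s a, IsCompact (Pu s a))
    (m : ℕ) (r : S → A → ℝ) (g : Fin m → S → A → ℝ)
    (lam : Fin m → ℝ)
    (π : S → A)
    (Vr : S → ℝ) (Vg : Fin m → S → ℝ)
    (hVr : ∀ s, Vr s = r s (π s)
      + γ * sInf ((fun p : S → ℝ => ∑ s', p s' * Vr s') '' Pu s (π s)))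
    (hVg : ∀ i s, Vg i s = g i s (π s)
      + γ * sInf ((fun p : S → ℝ => ∑ s', p s' * Vg i s') '' Pu s (π s)))
    (T : (S → ℝ) → (S → ℝ))
    (hT : ∀ (v : S → ℝ) (s : S), T v s =
      r s (π s) - (∑ i, lam i * g i s (π s))
      + γ * (∑ s', Po s (π s) s' * v s')
      + γ * sInf ((fun p : S → ℝ => ∑ s', (p s' - Po s (π s) s') * Vr s') '' Pu s (π s))
      - γ * ∑ i, lam i *
          sInf ((fun p : S → ℝ => ∑ s', (p s' - Po s (π s) s') * Vg i s') '' Pu s (π s))) :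
    T (fun s => Vr s - ∑ i, lam i * Vg i s) = (fun s => Vr s - ∑ i, lam i * Vg i s) ∧
    ∀ w : S → ℝ, T w = w → w = fun s => Vr s - ∑ i, lam i * Vg i s := by
  set V : S → ℝ := fun s => Vr s - ∑ i, lam i * Vg i s
  have hfix : T V = V := by
    funext s
    have nominal_form := eq_add_sum_mul_add_sInf_sub_of_eq (hPune s (π s)) (hPucpt s (π s))
      (Po s (π s))
    have hVg_sum : ∑ i, lam i * Vg i s = ∑ i, lam i * g i s (π s)
        + γ * ∑ i, lam i * ∑ s', Po s (π s) s' * Vg i s'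
        + γ * ∑ i, lam i *
          sInf ((fun p : S → ℝ => ∑ s', (p s' - Po s (π s) s') * Vg i s') '' Pu s (π s)) := by
      rw [mul_sum, mul_sum, ← sum_add_distrib, ← sum_add_distrib]
      exact sum_congr rfl fun i _ => by rw [nominal_form (Vg i) (hVg i s)]; ring
    rw [hT, sum_mul_sub_sum_mul]
    linear_combination hVg_sum - nominal_form Vr (hVr s)
  have hcontr : ContractingWith (⟨γ, hγ0⟩ : NNReal) T :=
    contractingWith_of_sub_eq_mul_stochastic hγ1 (fun s => hPo s (π s))
      fun w v s => by
        change _ = γ * _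
        rw [hT, hT]
        simp only [mul_sub, sum_sub_distrib]
        ring
  exact ⟨hfix, fun w hw => hcontr.fixedPoint_unique' hw hfix⟩

/-- If `V_r` and the `V_{g_i}` are the fixed points of the robust
Bellman consistency operators for `r` and the `g_i` under policy `π`, then
`V_r − Σᵢ λᵢ V_{g_i}` is the (unique) fixed point of the consistency operator
`T^π` (Proposition 3(3), fixed-point part). -/
theorem consistency_operator_fixed_point
    {S A : Type*} [Fintype S] [Nonempty S] [Fintype A] [Nonempty A]
    (γ : ℝ) (hγ0 : 0 ≤ γ) (hγ1 : γ < 1)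
    (Po : S → A → S → ℝ)
    (hPo : ∀ s a, (∀ s', 0 ≤ Po s a s') ∧ ∑ s', Po s a s' = 1)
    (Pu : S → A → Set (S → ℝ))
    (hPusub : ∀ s a, Pu s a ⊆ {p : S → ℝ | (∀ s', 0 ≤ p s') ∧ ∑ s', p s' = 1})
    (hPune : ∀ s a, (Pu s a).Nonempty)
    (hPucpt : ∀ s a, IsCompact (Pu s a))
    (m : ℕ) (r : S → A → ℝ) (g : Fin m → S → A → ℝ)
    (lam : Fin m → ℝ) (hlam : ∀ i, 0 ≤ lam i)
    (π : S → A)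
    (Vr : S → ℝ) (Vg : Fin m → S → ℝ)
    (hVr : ∀ s, Vr s = r s (π s)
      + γ * sInf ((fun p : S → ℝ => ∑ s', p s' * Vr s') '' Pu s (π s)))
    (hVg : ∀ i s, Vg i s = g i s (π s)
      + γ * sInf ((fun p : S → ℝ => ∑ s', p s' * Vg i s') '' Pu s (π s)))
    (T : (S → ℝ) → (S → ℝ))
    (hT : ∀ (v : S → ℝ) (s : S), T v s =
      r s (π s) - (∑ i, lam i * g i s (π s))
      + γ * (∑ s', Po s (π s) s' * v s')
      + γ * sInf ((fun p : S → ℝ => ∑ s', (p s' - Po s (π s) s') * Vr s') '' Pu s (π s))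
      - γ * ∑ i, lam i *
          sInf ((fun p : S → ℝ => ∑ s', (p s' - Po s (π s) s') * Vg i s') '' Pu s (π s))) :
    T (fun s => Vr s - ∑ i, lam i * Vg i s) = (fun s => Vr s - ∑ i, lam i * Vg i s) ∧
    ∀ w : S → ℝ, T w = w → w = fun s => Vr s - ∑ i, lam i * Vg i s :=
  consistency_operator_fixed_point_general γ hγ0 hγ1 Po hPo Pu hPune hPucpt m r g lam π Vr Vg hVr
    hVg T hT
end

section
/- Suppose ‖ε_k‖∞ ≤ ε̄ and ‖ε'_k‖∞ ≤ ε̄' for all k ≥ 1, where ε̄, ε̄' ≥ 0. Then for every k ≥ 1 and every s ∈ S, the loss l_k := v^{π_t} − v^{π^k} satisfies l_k(s) ≤ (2ε̄(γ − γ^k) + ε̄'(1 − γ^k))/(1 − γ)² + (2γ^k/(1 − γ)) · ‖v^0 − T^{π^1} v^0‖∞. -/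
/-- Scalar upper-bound sequence for the Bellman residual `b_k = v_k - T^{π_{k+1}} v_k`. -/
private noncomputable def ampiBB (γ eB eB' Bv : ℝ) (m : ℕ) : ℕ → ℝ
  | 0 => Bv
  | k+1 => γ ^ m * ampiBB γ eB eB' Bv m k + ((1 + γ) * eB + eB')

/-- Scalar upper-bound sequence for `v^{π_t} - (T^{π_{k}})^m v_{k-1}` (shifted by one). -/
private noncomputable def ampiUU (γ eB eB' Bv : ℝ) (m : ℕ) : ℕ → ℝ
  | 0 => (Bv + eB') / (1 - γ) - eB
  | k+1 => γ * ampiUU γ eB eB' Bv m k + γ * eB + eB'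
      + ((γ - γ ^ m) / (1 - γ)) * ampiBB γ eB eB' Bv m k

/-- Error bound for approximate modified policy iteration
(Theorem 1): the loss `l_k = v^{π_t} − v^{π^k}` is bounded by the accumulated
policy-improvement and policy-evaluation errors. -/
theorem ampi_loss_bound
    {S PI : Type*} [Fintype S] [Nonempty S]
    (γ : ℝ) (hγ0 : 0 ≤ γ) (hγ1 : γ < 1)
    (P : PI → S → S → ℝ)
    (hP : ∀ π s, (∀ s', 0 ≤ P π s s') ∧ ∑ s', P π s s' = 1)
    (c : PI → S → ℝ)
    (T : PI → (S → ℝ) → (S → ℝ))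
    (hT : ∀ π v s, T π v s = c π s + γ * ∑ s', P π s s' * v s')
    (vfix : PI → S → ℝ)
    (hfix : ∀ π, T π (vfix π) = vfix π)
    (πt : PI) (m : ℕ) (hm : 1 ≤ m)
    (πk : ℕ → PI) (vk : ℕ → S → ℝ) (eps eps' : ℕ → S → ℝ)
    (hgreedy : ∀ (k : ℕ) (π : PI) (s : S),
      T π (vk k) s ≤ T (πk (k + 1)) (vk k) s + eps' (k + 1) s)
    (heval : ∀ k : ℕ, vk (k + 1) = (T (πk (k + 1)))^[m] (vk k) + eps (k + 1))
    (ebar ebar' : ℝ) (hebar : 0 ≤ ebar) (hebar' : 0 ≤ ebar')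
    (heps : ∀ k, 1 ≤ k → ‖eps k‖ ≤ ebar)
    (heps' : ∀ k, 1 ≤ k → ‖eps' k‖ ≤ ebar') :
    ∀ k, 1 ≤ k → ∀ s : S,
      vfix πt s - vfix (πk k) s ≤
        (2 * ebar * (γ - γ ^ k) + ebar' * (1 - γ ^ k)) / (1 - γ) ^ 2
        + (2 * γ ^ k / (1 - γ)) * ‖vk 0 - T (πk 1) (vk 0)‖ := by
  have hg : (0:ℝ) < 1 - γ := by linarith
  -- basic facts about P
  have hPnn : ∀ π s s', 0 ≤ P π s s' := fun π s s' => (hP π s).1 s'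
  have hPsum : ∀ π s, ∑ s', P π s s' = 1 := fun π s => (hP π s).2
  -- averaging: if w ≤ a pointwise then ∑ P w ≤ a
  have havg : ∀ (π : PI) (s : S) (w : S → ℝ) (a : ℝ), (∀ s', w s' ≤ a) →
      ∑ s', P π s s' * w s' ≤ a := by
    intro π s w a h
    calc ∑ s', P π s s' * w s'
        ≤ ∑ s', P π s s' * a :=
          Finset.sum_le_sum (fun s' _ => mul_le_mul_of_nonneg_left (h s') (hPnn π s s'))
      _ = a := by rw [← Finset.sum_mul, hPsum, one_mul]
  -- contraction-type inequality for T
  have hTd : ∀ (π : PI) (u v : S → ℝ) (a : ℝ), (∀ s', u s' - v s' ≤ a) →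
      ∀ s, T π u s - T π v s ≤ γ * a := by
    intro π u v a h s
    have e : (∑ s', P π s s' * u s') - (∑ s', P π s s' * v s')
        = ∑ s', P π s s' * (u s' - v s') := by
      rw [← Finset.sum_sub_distrib]
      exact Finset.sum_congr rfl (fun s' _ => (mul_sub _ _ _).symm)
    have h2 : ∑ s', P π s s' * (u s' - v s') ≤ a := havg π s _ a h
    have h3 : γ * ((∑ s', P π s s' * u s') - (∑ s', P π s s' * v s')) ≤ γ * a := by
      rw [e]; exact mul_le_mul_of_nonneg_left h2 hγ0
    rw [hT, hT]; linarith
  -- iterated contraction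
  have hTiter : ∀ (π : PI) (u v : S → ℝ) (a : ℝ), (∀ s, u s - v s ≤ a) →
      ∀ n, ∀ s, (T π)^[n] u s - (T π)^[n] v s ≤ γ ^ n * a := by
    intro π u v a h n
    induction n with
    | zero => intro s; simpa using h s
    | succ n ih =>
        intro s
        rw [Function.iterate_succ_apply', Function.iterate_succ_apply']
        calc T π ((T π)^[n] u) s - T π ((T π)^[n] v) s
            ≤ γ * (γ ^ n * a) := hTd π _ _ _ ih s
          _ = γ ^ (n+1) * a := by ring
  -- residual accumulation
  have hresid : ∀ (π : PI) (w : S → ℝ) (a : ℝ), (∀ s, w s - T π w s ≤ a) →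
      ∀ n, ∀ s, w s - (T π)^[n] w s ≤ (1 - γ ^ n) / (1 - γ) * a := by
    intro π w a h n
    induction n with
    | zero => intro s; simp
    | succ n ih =>
        intro s
        have h1 : (T π)^[n] w s - (T π)^[n] (T π w) s ≤ γ ^ n * a :=
          hTiter π w (T π w) a h n s
        have h2 : (T π)^[n+1] w s = (T π)^[n] (T π w) s := by
          rw [Function.iterate_succ_apply]
        have h3 : (1 - γ ^ n) / (1 - γ) * a + γ ^ n * a = (1 - γ ^ (n+1)) / (1 - γ) * a := by
          field_simp
          ring
        have h4 := ih s
        rw [h2]; linarith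
  -- fixed-point / sup argument
  have hkey : ∀ (f : S → ℝ) (a : ℝ),
      (∀ b : ℝ, (∀ s, f s ≤ b) → ∀ s, f s ≤ γ * b + a) → ∀ s, f s ≤ a / (1 - γ) := by
    intro f a h
    set M := Finset.univ.sup' Finset.univ_nonempty f with hMdef
    have hub : ∀ s, f s ≤ M := fun s => Finset.le_sup' f (Finset.mem_univ s)
    obtain ⟨s0, -, hs0⟩ := Finset.exists_mem_eq_sup' Finset.univ_nonempty f
    have hM : M ≤ γ * M + a := by
      have := h M hub s0
      rw [hMdef, hs0]; rw [hMdef] at this; rw [hs0] at this; exact this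
    have hM2 : M ≤ a / (1 - γ) := by
      rw [le_div_iff₀ hg]; nlinarith
    exact fun s => le_trans (hub s) hM2
  -- sup-norm pointwise bounds
  have hn : ∀ (f : S → ℝ) (s : S), f s ≤ ‖f‖ ∧ -(f s) ≤ ‖f‖ := by
    intro f s
    have h1 : ‖f s‖ ≤ ‖f‖ := norm_le_pi_norm f s
    rw [Real.norm_eq_abs] at h1
    obtain ⟨hl, hr⟩ := abs_le.mp h1
    exact ⟨hr, by linarith⟩
  -- destructure m = n + 1
  obtain ⟨n, rfl⟩ : ∃ n, m = n + 1 := ⟨m - 1, by omega⟩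
  set Bv := ‖vk 0 - T (πk 1) (vk 0)‖ with hBv
  set bb := ampiBB γ ebar ebar' Bv (n+1) with hbbdef
  set uu := ampiUU γ ebar ebar' Bv (n+1) with huudef
  have hbb0 : bb 0 = Bv := rfl
  have hbbS : ∀ k, bb (k+1) = γ^(n+1) * bb k + ((1+γ)*ebar + ebar') := fun k => rfl
  have huu0 : uu 0 = (Bv + ebar')/(1-γ) - ebar := rfl
  have huuS : ∀ k, uu (k+1) = γ * uu k + γ*ebar + ebar'
      + ((γ - γ^(n+1))/(1-γ)) * bb k := fun k => rfl
  -- pointwise form of the evaluation step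
  have hW : ∀ k s, vk (k+1) s = (T (πk (k+1)))^[n+1] (vk k) s + eps (k+1) s := by
    intro k s; rw [heval k]; rfl
  -- Bellman residual bound: b_k ≤ bb k
  have Cb : ∀ k, ∀ s : S, vk k s - T (πk (k+1)) (vk k) s ≤ bb k := by
    intro k
    induction k with
    | zero =>
        intro s
        have h := (hn (vk 0 - T (πk 1) (vk 0)) s).1
        simp only [Pi.sub_apply] at h
        show vk 0 s - T (πk 1) (vk 0) s ≤ bb 0
        rw [hbb0, hBv]; exact h
    | succ k ih =>
        intro s
        have hg1 : T (πk (k+1)) (vk (k+1)) s ≤ T (πk (k+1+1)) (vk (k+1)) s + eps' (k+1+1) s :=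
          hgreedy (k+1) (πk (k+1)) s
        have hdec : T (πk (k+1)) (vk (k+1)) s
            = T (πk (k+1)) ((T (πk (k+1)))^[n+1] (vk k)) s
              + γ * ∑ s', P (πk (k+1)) s s' * eps (k+1) s' := by
          rw [hT, hT]
          have e : ∑ s', P (πk (k+1)) s s' * vk (k+1) s'
              = ∑ s', P (πk (k+1)) s s' * ((T (πk (k+1)))^[n+1] (vk k) s' + eps (k+1) s') :=
            Finset.sum_congr rfl (fun s' _ => by rw [hW k s'])
          rw [e]
          simp only [mul_add, Finset.sum_add_distrib]
          ring
        have hA : (T (πk (k+1)))^[n+1] (vk k) s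
              - T (πk (k+1)) ((T (πk (k+1)))^[n+1] (vk k)) s ≤ γ^(n+1) * bb k := by
          have e1 : T (πk (k+1)) ((T (πk (k+1)))^[n+1] (vk k))
              = (T (πk (k+1)))^[n+1] (T (πk (k+1)) (vk k)) := by
            rw [← Function.iterate_succ_apply' (T (πk (k+1))) (n+1) (vk k),
              Function.iterate_succ_apply]
          rw [e1]
          exact hTiter (πk (k+1)) (vk k) (T (πk (k+1)) (vk k)) (bb k) ih (n+1) s
        have hB : eps (k+1) s ≤ ebar :=
          le_trans (hn (eps (k+1)) s).1 (heps (k+1) (by omega))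
        have hC : -(γ * ∑ s', P (πk (k+1)) s s' * eps (k+1) s') ≤ γ * ebar := by
          rw [← mul_neg]
          apply mul_le_mul_of_nonneg_left _ hγ0
          have h3 : -(∑ s', P (πk (k+1)) s s' * eps (k+1) s')
              = ∑ s', P (πk (k+1)) s s' * (-(eps (k+1) s')) := by
            rw [← Finset.sum_neg_distrib]
            exact Finset.sum_congr rfl (fun s' _ => (mul_neg _ _).symm)
          rw [h3]
          exact havg _ s _ ebar
            (fun s' => le_trans ((hn (eps (k+1)) s').2) (heps (k+1) (by omega)))
        have hD : eps' (k+1+1) s ≤ ebar' :=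
          le_trans (hn (eps' (k+1+1)) s).1 (heps' (k+1+1) (by omega))
        have heq : bb (k+1) = γ^(n+1)*bb k + ebar + γ*ebar + ebar' := by
          rw [hbbS k]; ring
        have h5 := hW k s
        rw [heq]
        linarith
  -- initial distance bound
  have J0 : ∀ s : S, vfix πt s - vk 0 s ≤ (Bv + ebar') / (1 - γ) := by
    apply hkey (fun s => vfix πt s - vk 0 s) (Bv + ebar')
    intro b hb s
    have e0 : T πt (vfix πt) s = vfix πt s := congrFun (hfix πt) s
    have t1 : T πt (vfix πt) s - T πt (vk 0) s ≤ γ * b := hTd πt (vfix πt) (vk 0) b hb s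
    have t2 : T πt (vk 0) s ≤ T (πk 1) (vk 0) s + eps' 1 s := hgreedy 0 πt s
    have t2' : eps' 1 s ≤ ebar' := le_trans (hn (eps' 1) s).1 (heps' 1 (le_refl 1))
    have t3 : T (πk 1) (vk 0) s - vk 0 s ≤ Bv := by
      have h := (hn (vk 0 - T (πk 1) (vk 0)) s).2
      simp only [Pi.sub_apply] at h
      rw [hBv]; linarith
    linarith
  -- main inductive step for the distance-type bound
  have mainstep : ∀ K : ℕ, (∀ s, vfix πt s - vk K s ≤ uu K + ebar) →
      ∀ s : S, vfix πt s - (T (πk (K+1)))^[n+1] (vk K) s ≤ uu (K+1) := by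
    intro K hJ s
    have p1 : vfix πt s - T (πk (K+1)) (vk K) s ≤ γ * (uu K + ebar) + ebar' := by
      have a1 : T πt (vk K) s ≤ T (πk (K+1)) (vk K) s + eps' (K+1) s := hgreedy K πt s
      have a2 : T πt (vfix πt) s - T πt (vk K) s ≤ γ * (uu K + ebar) :=
        hTd πt (vfix πt) (vk K) (uu K + ebar) hJ s
      have a3 : T πt (vfix πt) s = vfix πt s := congrFun (hfix πt) s
      have a4 : eps' (K+1) s ≤ ebar' :=
        le_trans (hn (eps' (K+1)) s).1 (heps' (K+1) (by omega))
      linarith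
    have p2 : T (πk (K+1)) (vk K) s - (T (πk (K+1)))^[n+1] (vk K) s
        ≤ (1 - γ^n)/(1-γ) * (γ * bb K) := by
      have base : ∀ s', T (πk (K+1)) (vk K) s' - T (πk (K+1)) (T (πk (K+1)) (vk K)) s'
          ≤ γ * bb K := hTd (πk (K+1)) (vk K) (T (πk (K+1)) (vk K)) (bb K) (Cb K)
      have e1 : (T (πk (K+1)))^[n+1] (vk K)
          = (T (πk (K+1)))^[n] (T (πk (K+1)) (vk K)) := by
        rw [Function.iterate_succ_apply]
      rw [e1]
      exact hresid (πk (K+1)) (T (πk (K+1)) (vk K)) (γ * bb K) base n s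
    have e2 : γ * (uu K + ebar) + ebar' + (1 - γ^n)/(1-γ) * (γ * bb K) = uu (K+1) := by
      rw [huuS K]; field_simp; ring
    linarith
  -- distance bound by induction
  have Cu : ∀ k, ∀ s : S, vfix πt s - (T (πk (k+1)))^[n+1] (vk k) s ≤ uu (k+1) := by
    intro k
    induction k with
    | zero =>
        refine mainstep 0 ?_
        intro s
        have := J0 s
        rw [huu0] at *
        linarith
    | succ k ih =>
        refine mainstep (k+1) ?_
        intro s
        have h1 := ih s
        have h2 : -(eps (k+1) s) ≤ ebar :=
          le_trans (hn (eps (k+1)) s).2 (heps (k+1) (by omega))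
        have h3 := hW k s
        linarith
  -- shift bound
  have Cs : ∀ k, ∀ s : S, (T (πk (k+1)))^[n+1] (vk k) s - vfix (πk (k+1)) s
      ≤ γ^(n+1) * (bb k / (1-γ)) := by
    intro k s
    have hx : ∀ s, vk k s - vfix (πk (k+1)) s ≤ bb k / (1-γ) := by
      apply hkey (fun s => vk k s - vfix (πk (k+1))  s) (bb k)
      intro b hb s'
      have e0 : T (πk (k+1)) (vfix (πk (k+1))) s' = vfix (πk (k+1)) s' :=
        congrFun (hfix _) s'
      have t1 := Cb k s'
      have t2 : T (πk (k+1)) (vk k) s' - T (πk (k+1)) (vfix (πk (k+1))) s' ≤ γ * b :=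
        hTd _ _ _ b hb s'
      linarith
    have e1 : (T (πk (k+1)))^[n+1] (vfix (πk (k+1))) = vfix (πk (k+1)) :=
      Function.iterate_fixed (hfix (πk (k+1))) (n+1)
    have h := hTiter (πk (k+1)) (vk k) (vfix (πk (k+1))) (bb k / (1-γ)) hx (n+1) s
    rw [e1] at h
    exact h
  -- the scalar identity
  have Calg : ∀ j : ℕ, uu (j+1) + γ^(n+1) * (bb j / (1-γ))
      = (2*ebar*(γ - γ^(j+1)) + ebar'*(1 - γ^(j+1)))/(1-γ)^2 + (2*γ^(j+1)/(1-γ)) * Bv := by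
    intro j
    induction j with
    | zero =>
        rw [huuS 0, huu0, hbb0]
        field_simp
        ring
    | succ j ih =>
        have e1 := huuS (j+1)
        have e2 := hbbS j
        have e3 : uu (j+1) = ((2*ebar*(γ - γ^(j+1)) + ebar'*(1 - γ^(j+1)))/(1-γ)^2
            + (2*γ^(j+1)/(1-γ)) * Bv) - γ^(n+1)*(bb j/(1-γ)) := by linarith
        rw [e1, e2, e3]
        field_simp
        ring
  -- conclusion
  intro k hk s
  obtain ⟨j, rfl⟩ : ∃ j, k = j + 1 := ⟨k - 1, by omega⟩
  have h1 := Cu j s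
  have h2 := Cs j s
  have h3 := Calg j
  linarith
end

section
/- For every k ≥ 1, the Bellman residual b_k := v^k − T^{π^{k+1}} v^k satisfies the pointwise recursion b_k ≤ γ^m P_{π^k}^m b_{k−1} + x_k, where x_k := ε_k − γ P_{π^k} ε_k + ε'_{k+1}. -/
/-- Action of a stochastic matrix `P` on a vector `v`. -/
def applyKernel {S : Type*} [Fintype S] (P : S → S → ℝ) (v : S → ℝ) : S → ℝ :=
  fun s => ∑ s', P s s' * v s'

lemma applyKernel_sub {S : Type*} [Fintype S] (P : S → S → ℝ) (u w : S → ℝ) (s : S) :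
    applyKernel P (fun t => u t - w t) s = applyKernel P u s - applyKernel P w s := by
  simp [applyKernel, mul_sub, Finset.sum_sub_distrib]

lemma applyKernel_smul {S : Type*} [Fintype S] (P : S → S → ℝ) (a : ℝ) (g : S → ℝ) (s : S) :
    applyKernel P (fun t => a * g t) s = a * applyKernel P g s := by
  simp [applyKernel, Finset.mul_sum]; ring_nf
  exact Finset.sum_congr rfl fun x _ => by ring

/-- Recursion for the Bellman residual `b_k = v^k − T^{π^{k+1}} v^k`
in approximate modified policy iteration:
`b_k ≤ γ^m P_{π^k}^m b_{k−1} + x_k` pointwise, with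
`x_k = ε_k − γ P_{π^k} ε_k + ε'_{k+1}`. -/
theorem ampi_bellman_residual_recursion
    {S PI : Type*} [Fintype S] [Nonempty S]
    (γ : ℝ) (hγ0 : 0 ≤ γ) (hγ1 : γ < 1)
    (P : PI → S → S → ℝ)
    (hP : ∀ π s, (∀ s', 0 ≤ P π s s') ∧ ∑ s', P π s s' = 1)
    (c : PI → S → ℝ)
    (T : PI → (S → ℝ) → (S → ℝ))
    (hT : ∀ π v s, T π v s = c π s + γ * ∑ s', P π s s' * v s')
    (vfix : PI → S → ℝ)
    (hfix : ∀ π, T π (vfix π) = vfix π)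
    (πt : PI) (m : ℕ) (hm : 1 ≤ m)
    (πk : ℕ → PI) (vk : ℕ → S → ℝ) (eps eps' : ℕ → S → ℝ)
    (hgreedy : ∀ (k : ℕ) (π : PI) (s : S),
      T π (vk k) s ≤ T (πk (k + 1)) (vk k) s + eps' (k + 1) s)
    (heval : ∀ k : ℕ, vk (k + 1) = (T (πk (k + 1)))^[m] (vk k) + eps (k + 1)) :
    ∀ k, 1 ≤ k → ∀ s : S,
      vk k s - T (πk (k + 1)) (vk k) s ≤
        γ ^ m * ((applyKernel (P (πk k)))^[m]
            (vk (k - 1) - T (πk k) (vk (k - 1)))) s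
        + (eps k s - γ * applyKernel (P (πk k)) (eps k) s + eps' (k + 1) s) := by
  have hT' : ∀ π v s, T π v s = c π s + γ * applyKernel (P π) v s := by
    intro π v s; rw [hT]; rfl
  -- difference of iterates
  have key : ∀ (π : PI) (n : ℕ) (u w : S → ℝ),
      (fun s => (T π)^[n] u s - (T π)^[n] w s)
        = fun s => γ ^ n * (applyKernel (P π))^[n] (fun t => u t - w t) s := by
    intro π n
    induction n with
    | zero => intro u w; funext s; simp
    | succ n ih =>
      intro u w; funext s
      rw [Function.iterate_succ_apply', Function.iterate_succ_apply',
        Function.iterate_succ_apply', hT' π _ s, hT' π _ s]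
      have h1 : (fun t => (T π)^[n] u t - (T π)^[n] w t)
          = fun t => γ ^ n * (applyKernel (P π))^[n] (fun t => u t - w t) t := ih u w
      have h2 : applyKernel (P π) ((T π)^[n] u) s - applyKernel (P π) ((T π)^[n] w) s
          = γ ^ n * applyKernel (P π) ((applyKernel (P π))^[n] (fun t => u t - w t)) s := by
        rw [← applyKernel_sub, h1, applyKernel_smul]
      ring_nf
      ring_nf at h2
      nlinarith [h2]
  intro k hk s
  obtain ⟨j, rfl⟩ : ∃ j, k = j + 1 := ⟨k - 1, (Nat.succ_pred_eq_of_pos hk).symm⟩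
  simp only [Nat.add_sub_cancel]
  set π := πk (j + 1) with hπ
  have hv : vk (j + 1) = (T π)^[m] (vk j) + eps (j + 1) := heval j
  -- greedy step
  have hg := hgreedy (j + 1) π s
  -- main equality
  have hmain : vk (j + 1) s - T π (vk (j + 1)) s
      = γ ^ m * ((applyKernel (P π))^[m] (vk j - T π (vk j))) s
        + (eps (j + 1) s - γ * applyKernel (P π) (eps (j + 1)) s) := by
    have hadd : applyKernel (P π) (vk (j + 1)) s
        = applyKernel (P π) ((T π)^[m] (vk j)) s + applyKernel (P π) (eps (j + 1)) s := by
      have : (fun t => vk (j + 1) t - eps (j + 1) t) = (T π)^[m] (vk j) := by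
        funext t; rw [hv]; simp
      have h := applyKernel_sub (P π) (vk (j + 1)) (eps (j + 1)) s
      rw [this] at h
      linarith
    have hu : (T π)^[m] (vk j) s - (T π)^[m] (T π (vk j)) s
        = γ ^ m * (applyKernel (P π))^[m] (fun t => vk j t - T π (vk j) t) s :=
      congrFun (key π m (vk j) (T π (vk j))) s
    have hiter : T π ((T π)^[m] (vk j)) s = (T π)^[m] (T π (vk j)) s := by
      rw [← Function.iterate_succ_apply' (T π) m (vk j), Function.iterate_succ_apply]
    have hb : (vk j - T π (vk j)) = fun t => vk j t - T π (vk j) t := rfl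
    have hvs : vk (j + 1) s = (T π)^[m] (vk j) s + eps (j + 1) s := by rw [hv]; simp
    rw [hb, hvs, hT' π (vk (j + 1)) s, hadd, ← hu, ← hiter, hT' π ((T π)^[m] (vk j)) s]
    ring
  linarith [hmain, hg]
end

section
/- For every k ≥ 1, the distance d_k := v^{π_t} − (T^{π^k})^m v^{k−1} satisfies the pointwise recursion d_{k+1} ≤ γ P_{π_t} d_k + y_k + Σ_{j=1}^{m−1} γ^j P_{π^{k+1}}^j b_k, where y_k := −γ P_{π_t} ε_k + ε'_{k+1} and b_k := v^k − T^{π^{k+1}} v^k. -/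
/-- Recursion for the distance `d_k = v^{π_t} − (T^{π^k})^m v^{k−1}`
in approximate modified policy iteration:
`d_{k+1} ≤ γ P_{π_t} d_k + y_k + Σ_{j=1}^{m−1} γ^j P_{π^{k+1}}^j b_k` pointwise,
with `y_k = −γ P_{π_t} ε_k + ε'_{k+1}` and `b_k = v^k − T^{π^{k+1}} v^k`. -/
theorem ampi_distance_recursion
    {S PI : Type*} [Fintype S] [Nonempty S]
    (γ : ℝ) (hγ0 : 0 ≤ γ) (hγ1 : γ < 1)
    (P : PI → S → S → ℝ)
    (hP : ∀ π s, (∀ s', 0 ≤ P π s s') ∧ ∑ s', P π s s' = 1)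
    (c : PI → S → ℝ)
    (T : PI → (S → ℝ) → (S → ℝ))
    (hT : ∀ π v s, T π v s = c π s + γ * ∑ s', P π s s' * v s')
    (vfix : PI → S → ℝ)
    (hfix : ∀ π, T π (vfix π) = vfix π)
    (πt : PI) (m : ℕ) (hm : 1 ≤ m)
    (πk : ℕ → PI) (vk : ℕ → S → ℝ) (eps eps' : ℕ → S → ℝ)
    (hgreedy : ∀ (k : ℕ) (π : PI) (s : S),
      T π (vk k) s ≤ T (πk (k + 1)) (vk k) s + eps' (k + 1) s)
    (heval : ∀ k : ℕ, vk (k + 1) = (T (πk (k + 1)))^[m] (vk k) + eps (k + 1)) :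
    ∀ k, 1 ≤ k → ∀ s : S,
      vfix πt s - ((T (πk (k + 1)))^[m] (vk k)) s ≤
        γ * applyKernel (P πt) (vfix πt - (T (πk k))^[m] (vk (k - 1))) s
        + (-(γ * applyKernel (P πt) (eps k) s) + eps' (k + 1) s)
        + ∑ j ∈ Finset.Ico 1 m, γ ^ j *
            ((applyKernel (P (πk (k + 1))))^[j]
              (vk k - T (πk (k + 1)) (vk k))) s := by
  have hAKsub : ∀ (Q : S → S → ℝ) (u w : S → ℝ) (s : S),
      applyKernel Q (u - w) s = applyKernel Q u s - applyKernel Q w s := by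
    intro Q u w s
    simp [applyKernel, mul_sub, Finset.sum_sub_distrib]
  have hAKsmul : ∀ (Q : S → S → ℝ) (a : ℝ) (x : S → ℝ) (s : S),
      applyKernel Q (a • x) s = a * applyKernel Q x s := by
    intro Q a x s
    simp [applyKernel, Finset.mul_sum, mul_left_comm]
  have hA : ∀ (π : PI) (u w : S → ℝ) (s : S),
      T π u s - T π w s = γ * applyKernel (P π) (u - w) s := by
    intro π u w s
    rw [hT, hT, hAKsub]
    simp only [applyKernel]
    ring
  have hB : ∀ (π : PI) (j : ℕ) (u w : S → ℝ) (s : S),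
      (T π)^[j] u s - (T π)^[j] w s
        = γ ^ j * ((applyKernel (P π))^[j] (u - w)) s := by
    intro π j
    induction j with
    | zero => intro u w s; simp
    | succ j ih =>
      intro u w s
      rw [Function.iterate_succ_apply', Function.iterate_succ_apply',
          Function.iterate_succ_apply' (applyKernel (P π))]
      have h2 : ((T π)^[j] u - (T π)^[j] w)
          = (γ ^ j) • ((applyKernel (P π))^[j] (u - w)) := by
        funext t
        simpa using ih u w t
      rw [hA π ((T π)^[j] u) ((T π)^[j] w) s, h2, hAKsmul]
      ring
  intro k hk s
  have hk1 : k - 1 + 1 = k := Nat.succ_pred_eq_of_pos hk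
  have hv : vk k = (T (πk k))^[m] (vk (k - 1)) + eps k := by
    have h := heval (k - 1)
    rwa [hk1] at h
  have hsum : ∑ j ∈ Finset.Ico 1 m, γ ^ j *
        ((applyKernel (P (πk (k + 1))))^[j]
          (vk k - T (πk (k + 1)) (vk k))) s
      = T (πk (k + 1)) (vk k) s - (T (πk (k + 1)))^[m] (vk k) s := by
    have hterm : ∀ j : ℕ, γ ^ j *
          ((applyKernel (P (πk (k + 1))))^[j]
            (vk k - T (πk (k + 1)) (vk k))) s
        = (T (πk (k + 1)))^[j] (vk k) s - (T (πk (k + 1)))^[j + 1] (vk k) s := by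
      intro j
      rw [← hB (πk (k + 1)) j (vk k) (T (πk (k + 1)) (vk k)) s,
          Function.iterate_succ_apply]
    rw [Finset.sum_Ico_eq_sum_range]
    have hcongr : ∀ i ∈ Finset.range (m - 1),
        γ ^ (1 + i) * ((applyKernel (P (πk (k + 1))))^[1 + i]
            (vk k - T (πk (k + 1)) (vk k))) s
        = (fun i => (T (πk (k + 1)))^[i + 1] (vk k) s) i
          - (fun i => (T (πk (k + 1)))^[i + 1] (vk k) s) (i + 1) := by
      intro i _
      rw [Nat.add_comm 1 i, hterm (i + 1)]
    rw [Finset.sum_congr rfl hcongr,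
        Finset.sum_range_sub' (fun i => (T (πk (k + 1)))^[i + 1] (vk k) s) (m - 1)]
    simp only [Nat.sub_add_cancel hm]
    rfl
  have hfirst : γ * applyKernel (P πt) (vfix πt - (T (πk k))^[m] (vk (k - 1))) s
      - γ * applyKernel (P πt) (eps k) s = vfix πt s - T πt (vk k) s := by
    have e1 : vfix πt s - T πt (vk k) s = T πt (vfix πt) s - T πt (vk k) s := by
      rw [hfix]
    have e2 : (vfix πt - vk k)
        = (vfix πt - (T (πk k))^[m] (vk (k - 1))) - eps k := by
      rw [hv]; funext t; simp; ring
    rw [e1, hA πt (vfix πt) (vk k) s, e2,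
        hAKsub (P πt) (vfix πt - (T (πk k))^[m] (vk (k - 1))) (eps k) s]
    ring
  have hgre := hgreedy k πt s
  rw [hsum]
  linarith [hfirst, hgre]
end

section
/- Fix h ∈ [0,1) and define the modified consistency operator T₁^π by (T₁^π v)(s) := (T^π v)(s) − γh ⟨P^o_{s,π(s)}, v − V_r + Σ_{i=1}^m λ_i V_{g_i}⟩. Then: (1) Monotonicity: if v₁ ≥ v₂ pointwise then T₁^π v₁ ≥ T₁^π v₂ pointwise; (2) Transition invariance: for every c ∈ ℝ, T₁^π(v + c·1) = T₁^π v + γ(1−h)c·1; (3) Contraction: ‖T₁^π v₁ − T₁^π v₂‖∞ ≤ γ(1−h)‖v₁ − v₂‖∞ for all v₁, v₂. Moreover, if V_r is the fixed point of the robust Bellman consistency operator for r and π and each V_{g_i} is the fixed point of the robust Bellman consistency operator for g_i and π, then V_r − Σ_{i=1}^m λ_i V_{g_i} is the unique fixed point of T₁^π. -/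
lemma sInf_image_sub_const' (s : Set ℝ) (c : ℝ) (hne : s.Nonempty) (hb : BddBelow s) :
    sInf ((fun x => x - c) '' s) = sInf s - c :=
  (Monotone.map_csInf_of_continuousAt (continuousAt_id.sub continuousAt_const)
    (fun a b hab => by simpa using sub_le_sub_right hab c) hne hb).symm

/-- Properties of the modified consistency operator
`T₁^π v = T^π v − γh⟨P^o, v − V_r + Σᵢ λᵢ V_{g_i}⟩` for `h ∈ [0,1)`:
monotonicity, transition invariance with factor `γ(1−h)`, `γ(1−h)`-contraction,
and — when `V_r`, `V_{g_i}` are the robust Bellman fixed points —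
`V_r − Σᵢ λᵢ V_{g_i}` is its unique fixed point (Proposition 5). -/
theorem modified_consistency_operator_properties
    {S A : Type*} [Fintype S] [Nonempty S] [Fintype A] [Nonempty A]
    (γ : ℝ) (hγ0 : 0 ≤ γ) (hγ1 : γ < 1)
    (h : ℝ) (hh0 : 0 ≤ h) (hh1 : h < 1)
    (Po : S → A → S → ℝ)
    (hPo : ∀ s a, (∀ s', 0 ≤ Po s a s') ∧ ∑ s', Po s a s' = 1)
    (Pu : S → A → Set (S → ℝ))
    (hPusub : ∀ s a, Pu s a ⊆ {p : S → ℝ | (∀ s', 0 ≤ p s') ∧ ∑ s', p s' = 1})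
    (hPune : ∀ s a, (Pu s a).Nonempty)
    (hPucpt : ∀ s a, IsCompact (Pu s a))
    (m : ℕ) (r : S → A → ℝ) (g : Fin m → S → A → ℝ)
    (lam : Fin m → ℝ) (hlam : ∀ i, 0 ≤ lam i)
    (π : S → A)
    (Vr : S → ℝ) (Vg : Fin m → S → ℝ)
    (T : (S → ℝ) → (S → ℝ))
    (hT : ∀ (v : S → ℝ) (s : S), T v s =
      r s (π s) - (∑ i, lam i * g i s (π s))
      + γ * (∑ s', Po s (π s) s' * v s')
      + γ * sInf ((fun p : S → ℝ => ∑ s', (p s' - Po s (π s) s') * Vr s') '' Pu s (π s))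
      - γ * ∑ i, lam i *
          sInf ((fun p : S → ℝ => ∑ s', (p s' - Po s (π s) s') * Vg i s') '' Pu s (π s)))
    (T1 : (S → ℝ) → (S → ℝ))
    (hT1 : ∀ (v : S → ℝ) (s : S), T1 v s =
      T v s - γ * h * ∑ s', Po s (π s) s' * (v s' - Vr s' + ∑ i, lam i * Vg i s')) :
    (∀ v₁ v₂ : S → ℝ, (∀ s, v₂ s ≤ v₁ s) → ∀ s, T1 v₂ s ≤ T1 v₁ s) ∧
    (∀ (cst : ℝ) (v : S → ℝ),
      T1 (fun s => v s + cst) = fun s => T1 v s + γ * (1 - h) * cst) ∧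
    (∀ v₁ v₂ : S → ℝ, ‖T1 v₁ - T1 v₂‖ ≤ γ * (1 - h) * ‖v₁ - v₂‖) ∧
    (((∀ s, Vr s = r s (π s)
        + γ * sInf ((fun p : S → ℝ => ∑ s', p s' * Vr s') '' Pu s (π s))) ∧
      (∀ i s, Vg i s = g i s (π s)
        + γ * sInf ((fun p : S → ℝ => ∑ s', p s' * Vg i s') '' Pu s (π s)))) →
      (T1 (fun s => Vr s - ∑ i, lam i * Vg i s)
          = (fun s => Vr s - ∑ i, lam i * Vg i s) ∧
        ∀ w : S → ℝ, T1 w = w → w = fun s => Vr s - ∑ i, lam i * Vg i s)) := by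
  have hfac0 : 0 ≤ γ * (1 - h) := mul_nonneg hγ0 (by linarith)
  have hfac1 : γ * (1 - h) < 1 := by nlinarith
  -- key difference formula
  have key : ∀ (v₁ v₂ : S → ℝ) (s : S),
      T1 v₁ s - T1 v₂ s = γ * (1 - h) * ∑ s', Po s (π s) s' * (v₁ s' - v₂ s') := by
    intro v₁ v₂ s
    have expand : ∀ v : S → ℝ,
        (∑ s', Po s (π s) s' * (v s' - Vr s' + ∑ i, lam i * Vg i s'))
        = (∑ s', Po s (π s) s' * v s') - (∑ s', Po s (π s) s' * Vr s')
          + ∑ s', Po s (π s) s' * ∑ i, lam i * Vg i s' := by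
      intro v
      simp only [mul_sub, mul_add, Finset.sum_add_distrib, Finset.sum_sub_distrib]
    have expand2 : (∑ s', Po s (π s) s' * (v₁ s' - v₂ s'))
        = (∑ s', Po s (π s) s' * v₁ s') - ∑ s', Po s (π s) s' * v₂ s' := by
      simp only [mul_sub, Finset.sum_sub_distrib]
    rw [hT1, hT1, hT, hT, expand v₁, expand v₂, expand2]
    ring
  constructor
  · intro v₁ v₂ hle s
    have h1 : 0 ≤ ∑ s', Po s (π s) s' * (v₁ s' - v₂ s') :=
      Finset.sum_nonneg fun s' _ =>
        mul_nonneg ((hPo s (π s)).1 s') (by linarith [hle s'])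
    have := key v₁ v₂ s
    nlinarith
  constructor
  · intro cst v
    funext s
    have := key (fun s => v s + cst) v s
    simp only [add_sub_cancel_left] at this
    rw [← Finset.sum_mul, (hPo s (π s)).2, one_mul] at this
    linarith
  have contr : ∀ v₁ v₂ : S → ℝ, ‖T1 v₁ - T1 v₂‖ ≤ γ * (1 - h) * ‖v₁ - v₂‖ := by
    intro v₁ v₂
    rw [pi_norm_le_iff_of_nonneg (mul_nonneg hfac0 (norm_nonneg _))]
    intro s
    have hb : |∑ s', Po s (π s) s' * (v₁ s' - v₂ s')| ≤ ‖v₁ - v₂‖ := by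
      calc |∑ s', Po s (π s) s' * (v₁ s' - v₂ s')|
          ≤ ∑ s', |Po s (π s) s' * (v₁ s' - v₂ s')| := Finset.abs_sum_le_sum_abs _ _
        _ ≤ ∑ s', Po s (π s) s' * ‖v₁ - v₂‖ := by
            refine Finset.sum_le_sum fun s' _ => ?_
            rw [abs_mul, abs_of_nonneg ((hPo s (π s)).1 s')]
            refine mul_le_mul_of_nonneg_left ?_ ((hPo s (π s)).1 s')
            have := norm_le_pi_norm (v₁ - v₂) s'
            simpa [Real.norm_eq_abs] using this
        _ = ‖v₁ - v₂‖ := by rw [← Finset.sum_mul, (hPo s (π s)).2, one_mul]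
    have : ‖(T1 v₁ - T1 v₂) s‖ = γ * (1 - h) * |∑ s', Po s (π s) s' * (v₁ s' - v₂ s')| := by
      rw [Pi.sub_apply, Real.norm_eq_abs, key v₁ v₂ s, abs_mul, abs_of_nonneg hfac0]
    rw [this]
    exact mul_le_mul_of_nonneg_left hb hfac0
  refine ⟨contr, fun ⟨hVr, hVg⟩ => ?_⟩
  -- fixed point
  have hfix : T1 (fun s => Vr s - ∑ i, lam i * Vg i s)
      = fun s => Vr s - ∑ i, lam i * Vg i s := by
    funext s
    -- the h-term vanishes
    have hz : (∑ s', Po s (π s) s' *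
        ((Vr s' - ∑ i, lam i * Vg i s') - Vr s' + ∑ i, lam i * Vg i s')) = 0 := by
      apply Finset.sum_eq_zero; intro s' _; ring
    rw [hT1, hz, mul_zero, sub_zero, hT]
    -- rewrite the shifted sInfs
    have hshift : ∀ (V : S → ℝ),
        sInf ((fun p : S → ℝ => ∑ s', (p s' - Po s (π s) s') * V s') '' Pu s (π s))
          = sInf ((fun p : S → ℝ => ∑ s', p s' * V s') '' Pu s (π s))
            - ∑ s', Po s (π s) s' * V s' := by
      intro V
      have hc : Continuous (fun p : S → ℝ => ∑ s', p s' * V s') :=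
        continuous_finset_sum _ fun s' _ => (continuous_apply s').mul continuous_const
      have hK : IsCompact ((fun p : S → ℝ => ∑ s', p s' * V s') '' Pu s (π s)) :=
        (hPucpt s (π s)).image hc
      have hne' : ((fun p : S → ℝ => ∑ s', p s' * V s') '' Pu s (π s)).Nonempty :=
        (hPune s (π s)).image _
      have him : ((fun p : S → ℝ => ∑ s', (p s' - Po s (π s) s') * V s') '' Pu s (π s))
          = (fun x => x - ∑ s', Po s (π s) s' * V s') ''
              ((fun p : S → ℝ => ∑ s', p s' * V s') '' Pu s (π s)) := by
        rw [Set.image_image]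
        apply Set.image_congr
        intro p _
        rw [← Finset.sum_sub_distrib]
        apply Finset.sum_congr rfl
        intro s' _; ring
      rw [him, sInf_image_sub_const' _ _ hne' hK.bddBelow]
    rw [hshift Vr]
    have : (∑ i, lam i * sInf ((fun p : S → ℝ =>
        ∑ s', (p s' - Po s (π s) s') * Vg i s') '' Pu s (π s)))
        = ∑ i, lam i * (sInf ((fun p : S → ℝ => ∑ s', p s' * Vg i s') '' Pu s (π s))
            - ∑ s', Po s (π s) s' * Vg i s') := by
      apply Finset.sum_congr rfl
      intro i _; rw [hshift (Vg i)]
    rw [this]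
    have hVr' := hVr s
    have hVg' : ∀ i, Vg i s = g i s (π s)
        + γ * sInf ((fun p : S → ℝ => ∑ s', p s' * Vg i s') '' Pu s (π s)) := fun i => hVg i s
    -- expand Po-sum of the combination
    have hPsum : (∑ s', Po s (π s) s' * (Vr s' - ∑ i, lam i * Vg i s'))
        = (∑ s', Po s (π s) s' * Vr s')
          - ∑ i, lam i * ∑ s', Po s (π s) s' * Vg i s' := by
      simp only [mul_sub, Finset.sum_sub_distrib, Finset.mul_sum]
      congr 1
      rw [Finset.sum_comm]
      apply Finset.sum_congr rfl
      intro s' _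
      apply Finset.sum_congr rfl
      intro i _; ring
    rw [hPsum]
    have hsplit : (∑ i, lam i * (sInf ((fun p : S → ℝ => ∑ s', p s' * Vg i s') '' Pu s (π s))
          - ∑ s', Po s (π s) s' * Vg i s'))
        = (∑ i, lam i * sInf ((fun p : S → ℝ => ∑ s', p s' * Vg i s') '' Pu s (π s)))
          - ∑ i, lam i * ∑ s', Po s (π s) s' * Vg i s' := by
      simp only [mul_sub, Finset.sum_sub_distrib]
    rw [hsplit]
    have hVgsum : (∑ i, lam i * Vg i s)
        = (∑ i, lam i * g i s (π s))
          + γ * ∑ i, lam i * sInf ((fun p : S → ℝ => ∑ s', p s' * Vg i s') '' Pu s (π s)) := by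
      calc (∑ i, lam i * Vg i s)
          = ∑ i, (lam i * g i s (π s)
            + γ * (lam i * sInf ((fun p : S → ℝ => ∑ s', p s' * Vg i s') '' Pu s (π s)))) :=
            Finset.sum_congr rfl fun i _ => by rw [hVg i s]; ring
        _ = _ := by rw [Finset.sum_add_distrib, ← Finset.mul_sum]
    rw [hVr s, hVgsum]
    ring
  refine ⟨hfix, fun w hw => ?_⟩
  have hc := contr w (fun s => Vr s - ∑ i, lam i * Vg i s)
  rw [hw, hfix] at hc
  have hn : ‖w - fun s => Vr s - ∑ i, lam i * Vg i s‖ = 0 := by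
    have h0 : (0:ℝ) ≤ ‖w - fun s => Vr s - ∑ i, lam i * Vg i s‖ := norm_nonneg _
    nlinarith
  have := norm_eq_zero.mp hn
  exact sub_eq_zero.mp this
end

section
/- Suppose the family (T^π)_{π∈Π} is linear with witness f, each T^π is a γ-contraction with respect to the sup norm on functions S → ℝ, and for each π ∈ Π the function v^π : S → ℝ is a fixed point of T^π. Then for all stochastic policies π₁, π₂ ∈ Π and every s ∈ S: |v^{π₁}(s) − v^{π₂}(s)| ≤ γ ‖v^{π₁} − v^{π₂}‖∞ + | Σ_{a∈A} (π₁(s)(a) − π₂(s)(a)) · f(v^{π₂})(s,a) |. -/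
/-- Key inequality in the proof of the impossibility theorem
(Theorem 2): if the family `(T^π)` is linear with witness `f`, each `T^π` is a
`γ`-contraction in the sup norm, and `v^π` is a fixed point of `T^π`, then for
all stochastic policies `π₁, π₂` and every state `s`,
`|v^{π₁}(s) − v^{π₂}(s)| ≤ γ‖v^{π₁} − v^{π₂}‖∞ + |Σ_a (π₁(s)(a) − π₂(s)(a)) f(v^{π₂})(s,a)|`. -/
theorem impossibility_key_inequality
    {S A : Type*} [Fintype S] [Nonempty S] [Fintype A] [Nonempty A]
    (γ : ℝ) (hγ0 : 0 ≤ γ) (hγ1 : γ < 1)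
    (T : (S → A → ℝ) → (S → ℝ) → (S → ℝ))
    (f : (S → ℝ) → S → A → ℝ)
    (hlin : ∀ π : S → A → ℝ, (∀ s, (∀ a, 0 ≤ π s a) ∧ ∑ a, π s a = 1) →
      ∀ (v : S → ℝ) (s : S), T π v s = ∑ a, π s a * f v s a)
    (hcontr : ∀ π : S → A → ℝ, (∀ s, (∀ a, 0 ≤ π s a) ∧ ∑ a, π s a = 1) →
      ∀ v w : S → ℝ, ‖T π v - T π w‖ ≤ γ * ‖v - w‖)
    (vfun : (S → A → ℝ) → (S → ℝ))
    (hfix : ∀ π : S → A → ℝ, (∀ s, (∀ a, 0 ≤ π s a) ∧ ∑ a, π s a = 1) →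
      T π (vfun π) = vfun π) :
    ∀ π₁ π₂ : S → A → ℝ,
      (∀ s, (∀ a, 0 ≤ π₁ s a) ∧ ∑ a, π₁ s a = 1) →
      (∀ s, (∀ a, 0 ≤ π₂ s a) ∧ ∑ a, π₂ s a = 1) →
      ∀ s : S,
        |vfun π₁ s - vfun π₂ s| ≤
          γ * ‖vfun π₁ - vfun π₂‖
          + |∑ a, (π₁ s a - π₂ s a) * f (vfun π₂) s a| := by
  intro π₁ π₂ h₁ h₂ s
  have key : vfun π₁ s - vfun π₂ s =
      (T π₁ (vfun π₁) s - T π₁ (vfun π₂) s) +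
      ∑ a, (π₁ s a - π₂ s a) * f (vfun π₂) s a := by
    have e1 : T π₁ (vfun π₁) s = vfun π₁ s := by rw [hfix π₁ h₁]
    have e2 : T π₂ (vfun π₂) s = vfun π₂ s := by rw [hfix π₂ h₂]
    rw [e1]
    have : ∑ a, (π₁ s a - π₂ s a) * f (vfun π₂) s a
        = T π₁ (vfun π₂) s - T π₂ (vfun π₂) s := by
      rw [hlin π₁ h₁, hlin π₂ h₂, ← Finset.sum_sub_distrib]
      congr 1; ext a; ring
    rw [this, e2]; ring
  calc |vfun π₁ s - vfun π₂ s|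
      ≤ |T π₁ (vfun π₁) s - T π₁ (vfun π₂) s| +
        |∑ a, (π₁ s a - π₂ s a) * f (vfun π₂) s a| := by
        rw [key]; exact abs_add_le _ _
    _ ≤ γ * ‖vfun π₁ - vfun π₂‖ + |∑ a, (π₁ s a - π₂ s a) * f (vfun π₂) s a| := by
        gcongr
        calc |T π₁ (vfun π₁) s - T π₁ (vfun π₂) s|
            = ‖(T π₁ (vfun π₁) - T π₁ (vfun π₂)) s‖ := by simp [Pi.sub_apply]
          _ ≤ ‖T π₁ (vfun π₁) - T π₁ (vfun π₂)‖ := norm_le_pi_norm _ s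
          _ ≤ γ * ‖vfun π₁ - vfun π₂‖ := hcontr π₁ h₁ _ _
end
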